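/- Let (Ω, F, P) be a probability space with a filtration (F_i)_{i ≥ 0}, b ∈ (1, 2], τ > 0, C ≥ 0, and let (D_i)_{i ≥ 1} be random variables such that each D_i is F_i-measurable, E[|D_i|^b] < ∞, and E[|D_i|^b | F_{i−1}] ≤ C almost surely for every i. Set Z_i = ψ_τ(D_i) − E[ψ_τ(D_i) | F_{i−1}]. Then M_n = Σ_{i=1}^n Z_i is a square-integrable martingale with respect to (F_n), and E[M_n²] ≤ n C τ^{2−b} for every n ≥ 1. -/

import Mathlib

open MeasureTheory Real

/-- The truncation function `ψ_τ(x) = max(−τ, min(x, τ))`. -/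
noncomputable def truncFun (τ : ℝ) (x : ℝ) : ℝ := max (-τ) (min x τ)

/-!
Since `|ψ_τ(x)| ≤ min(|x|, τ)`, interpolation gives `ψ_τ(x)² ≤ |x|^b τ^{2-b}`, so
`E[ψ_τ(D_i)²] ≤ C τ^{2-b}`. The increments `Z_i` are orthogonal in `L²`: `M_{n-1}` is
`F_{n-1}`-measurable and `E[Z_n | F_{n-1}] = 0`, hence `E[M_n²] = Σ E[Z_i²]`. Finally
`E[Z_i²] = E[Var(ψ_τ(D_i) | F_{i-1})] ≤ E[ψ_τ(D_i)²]`.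
-/

open ProbabilityTheory Finset

section Truncation

variable {τ : ℝ}

lemma continuous_truncFun (τ : ℝ) : Continuous (truncFun τ) :=
  continuous_const.max (continuous_id.min continuous_const)

lemma abs_truncFun_le (hτ : 0 ≤ τ) (x : ℝ) : |truncFun τ x| ≤ τ :=
  abs_le.2 ⟨le_max_left _ _, max_le (by linarith) (min_le_right _ _)⟩

lemma abs_truncFun_le_abs (hτ : 0 ≤ τ) (x : ℝ) : |truncFun τ x| ≤ |x| := by
  have hx := abs_nonneg x
  exact abs_le.2 ⟨le_max_of_le_right (le_min (neg_abs_le x) (by linarith)),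
    max_le (by linarith) ((min_le_left _ _).trans (le_abs_self x))⟩

lemma truncFun_sq_le (hτ : 0 ≤ τ) {b : ℝ} (hb₀ : 0 ≤ b) (hb₂ : b ≤ 2) (x : ℝ) :
    truncFun τ x ^ 2 ≤ |x| ^ b * τ ^ (2 - b) := by
  have hy := abs_nonneg (truncFun τ x)
  calc truncFun τ x ^ 2 = |truncFun τ x| ^ b * |truncFun τ x| ^ (2 - b) := by
        rw [← rpow_add' hy (by norm_num), add_sub_cancel, rpow_two, sq_abs]
    _ ≤ |x| ^ b * τ ^ (2 - b) :=
        mul_le_mul (rpow_le_rpow hy (abs_truncFun_le_abs hτ x) hb₀)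
          (rpow_le_rpow hy (abs_truncFun_le hτ x) (by linarith))
          (rpow_nonneg hy _) (rpow_nonneg (abs_nonneg x) _)

lemma integral_truncFun_sq_le {Ω : Type*} {mΩ : MeasurableSpace Ω} {μ : Measure Ω}
    (hτ : 0 ≤ τ) {b : ℝ} (hb₀ : 0 ≤ b) (hb₂ : b ≤ 2) {X : Ω → ℝ}
    (hX : Integrable (fun ω => |X ω| ^ b) μ) :
    ∫ ω, truncFun τ (X ω) ^ 2 ∂μ ≤ (∫ ω, |X ω| ^ b ∂μ) * τ ^ (2 - b) := by
  rw [← integral_mul_const]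
  exact integral_mono_of_nonneg (ae_of_all _ fun ω => sq_nonneg _) (hX.mul_const _)
    (ae_of_all _ fun ω => truncFun_sq_le hτ hb₀ hb₂ (X ω))

end Truncation

section ConditionalExpectation

variable {Ω : Type*} {m mΩ : MeasurableSpace Ω} {μ : Measure Ω}

lemma condExp_sub_condExp_ae_eq_zero (hm : m ≤ mΩ) [SigmaFinite (μ.trim hm)] {f : Ω → ℝ}
    (hf : Integrable f μ) : μ[f - μ[f | m] | m] =ᵐ[μ] 0 := by
  filter_upwards [condExp_sub hf integrable_condExp m] with ω hω
  rw [hω, condExp_of_stronglyMeasurable hm stronglyMeasurable_condExp integrable_condExp]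
  simp

lemma integral_mul_eq_zero_of_condExp_ae_eq_zero (hm : m ≤ mΩ) [SigmaFinite (μ.trim hm)]
    {f g : Ω → ℝ} (hf : StronglyMeasurable[m] f) (hfg : Integrable (f * g) μ)
    (hg : Integrable g μ) (hg₀ : μ[g | m] =ᵐ[μ] 0) :
    ∫ ω, f ω * g ω ∂μ = 0 := by
  have hcond : μ[f * g | m] =ᵐ[μ] 0 := by
    filter_upwards [condExp_mul_of_stronglyMeasurable_left hf hfg hg, hg₀] with ω h₁ h₂
    simp [h₁, h₂]
  calc ∫ ω, f ω * g ω ∂μ = ∫ ω, (μ[f * g | m]) ω ∂μ := (integral_condExp hm).symm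
    _ = 0 := by simp [integral_congr_ae hcond]

lemma integral_sq_sub_condExp_le (hm : m ≤ mΩ) [IsFiniteMeasure μ] {f : Ω → ℝ}
    (hf : MemLp f 2 μ) : ∫ ω, (f ω - (μ[f | m]) ω) ^ 2 ∂μ ≤ ∫ ω, f ω ^ 2 ∂μ :=
  calc ∫ ω, (f ω - (μ[f | m]) ω) ^ 2 ∂μ = ∫ ω, (Var[f; μ | m]) ω ∂μ := by
        simpa using (setIntegral_condVar (hm := hm)
          (hf.sub (hf.condExp one_le_two)).integrable_sq MeasurableSet.univ).symm
    _ ≤ ∫ ω, (μ[f ^ 2 | m]) ω ∂μ :=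
        integral_mono_ae integrable_condVar integrable_condExp (condVar_ae_le_condExp_sq hm hf)
    _ = ∫ ω, f ω ^ 2 ∂μ := integral_condExp hm

lemma integral_add_sq_of_integral_mul_eq_zero {f g : Ω → ℝ} (hf : MemLp f 2 μ)
    (hg : MemLp g 2 μ) (hfg : ∫ ω, f ω * g ω ∂μ = 0) :
    ∫ ω, (f ω + g ω) ^ 2 ∂μ = ∫ ω, f ω ^ 2 ∂μ + ∫ ω, g ω ^ 2 ∂μ := by
  have hexpand : ∀ ω, (f ω + g ω) ^ 2 = f ω ^ 2 + 2 * (f ω * g ω) + g ω ^ 2 := fun ω => by ring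
  simp_rw [hexpand]
  have hfg_int : Integrable (fun ω => f ω * g ω) μ := hf.integrable_mul hg
  rw [integral_add _ hg.integrable_sq, integral_add hf.integrable_sq (hfg_int.const_mul 2),
    integral_const_mul, hfg]
  · ring
  · exact hf.integrable_sq.add (hfg_int.const_mul 2)

end ConditionalExpectation

section CompensatedSum

variable {Ω : Type*} {mΩ : MeasurableSpace Ω} {μ : Measure Ω}
  {ℱ : Filtration ℕ mΩ} {ψ : ℕ → Ω → ℝ}

noncomputable def compensatedSum (μ : Measure Ω) (ℱ : Filtration ℕ mΩ) (ψ : ℕ → Ω → ℝ)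
    (n : ℕ) (ω : Ω) : ℝ :=
  ∑ i ∈ range n, (ψ i ω - (μ[ψ i | ℱ i]) ω)

lemma compensatedSum_succ (n : ℕ) :
    compensatedSum μ ℱ ψ (n + 1) = compensatedSum μ ℱ ψ n + (ψ n - μ[ψ n | ℱ n]) :=
  funext fun _ => sum_range_succ _ _

lemma stronglyAdapted_compensatedSum (hψ : ∀ i, StronglyMeasurable[ℱ (i + 1)] (ψ i)) :
    StronglyAdapted ℱ (compensatedSum μ ℱ ψ) := fun _ =>
  Finset.stronglyMeasurable_fun_sum _ fun i hi =>
    ((hψ i).mono (ℱ.mono (mem_range.1 hi))).sub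
      (stronglyMeasurable_condExp.mono (ℱ.mono (mem_range.1 hi).le))

lemma memLp_compensatedSum {p : ENNReal} (hp : 1 ≤ p) (hψ : ∀ i, MemLp (ψ i) p μ) (n : ℕ) :
    MemLp (compensatedSum μ ℱ ψ n) p μ :=
  memLp_finsetSum _ fun i _ => (hψ i).sub ((hψ i).condExp hp)

lemma martingale_compensatedSum [IsFiniteMeasure μ]
    (hψ : ∀ i, StronglyMeasurable[ℱ (i + 1)] (ψ i))
    (hint : ∀ i, Integrable (ψ i) μ) : Martingale (compensatedSum μ ℱ ψ) ℱ μ := by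
  refine martingale_of_condExp_sub_eq_zero_nat (stronglyAdapted_compensatedSum hψ)
    (fun n => integrable_finsetSum _ fun i _ => (hint i).sub integrable_condExp) fun n => ?_
  rw [compensatedSum_succ, add_sub_cancel_left]
  exact condExp_sub_condExp_ae_eq_zero (ℱ.le n) (hint n)

lemma integral_compensatedSum_sq_le [IsFiniteMeasure μ]
    (hψ : ∀ i, StronglyMeasurable[ℱ (i + 1)] (ψ i))
    (hψ₂ : ∀ i, MemLp (ψ i) 2 μ) {K : ℝ} (hK : ∀ i, ∫ ω, ψ i ω ^ 2 ∂μ ≤ K) (n : ℕ) :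
    ∫ ω, compensatedSum μ ℱ ψ n ω ^ 2 ∂μ ≤ n * K := by
  induction n with
  | zero => simp [compensatedSum]
  | succ n ih =>
    have hM := memLp_compensatedSum (ℱ := ℱ) one_le_two hψ₂ n
    have hZ : MemLp (ψ n - μ[ψ n | ℱ n]) 2 μ := (hψ₂ n).sub ((hψ₂ n).condExp one_le_two)
    have horth : ∫ ω, compensatedSum μ ℱ ψ n ω * (ψ n - μ[ψ n | ℱ n]) ω ∂μ = 0 :=
      integral_mul_eq_zero_of_condExp_ae_eq_zero (ℱ.le n) (stronglyAdapted_compensatedSum hψ n)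
        (hM.integrable_mul hZ) (hZ.integrable one_le_two)
        (condExp_sub_condExp_ae_eq_zero (ℱ.le n) ((hψ₂ n).integrable one_le_two))
    calc ∫ ω, compensatedSum μ ℱ ψ (n + 1) ω ^ 2 ∂μ
        = ∫ ω, compensatedSum μ ℱ ψ n ω ^ 2 ∂μ + ∫ ω, (ψ n ω - (μ[ψ n | ℱ n]) ω) ^ 2 ∂μ := by
          rw [compensatedSum_succ]
          exact integral_add_sq_of_integral_mul_eq_zero hM hZ horth
      _ ≤ n * K + K := add_le_add ih ((integral_sq_sub_condExp_le (ℱ.le n) (hψ₂ n)).trans (hK n))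
      _ = (n + 1 : ℕ) * K := by push_cast; ring

end CompensatedSum

theorem truncated_martingale_variance_bound_general
    {Ω : Type*} {mΩ : MeasurableSpace Ω} (μ : Measure Ω) [IsProbabilityMeasure μ]
    (ℱ : Filtration ℕ mΩ)
    (b τ C : ℝ) (hb : b ∈ Set.Ioc (1 : ℝ) 2) (hτ : 0 < τ)
    (D : ℕ → Ω → ℝ)
    (hmeas : ∀ i, Measurable[ℱ (i + 1)] (D i))
    (hint : ∀ i, Integrable (fun ω => |D i ω| ^ b) μ)
    (hcond : ∀ i, ∀ᵐ ω ∂μ, (μ[fun ω' => |D i ω'| ^ b | ℱ i]) ω ≤ C) :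
    Martingale
      (fun n ω => ∑ i ∈ Finset.range n,
        (truncFun τ (D i ω) - (μ[fun ω' => truncFun τ (D i ω') | ℱ i]) ω)) ℱ μ ∧
    (∀ n : ℕ,
      MemLp (fun ω => ∑ i ∈ Finset.range n,
        (truncFun τ (D i ω) - (μ[fun ω' => truncFun τ (D i ω') | ℱ i]) ω)) 2 μ) ∧
    (∀ n : ℕ, 1 ≤ n →
      ∫ ω, (∑ i ∈ Finset.range n,
          (truncFun τ (D i ω) - (μ[fun ω' => truncFun τ (D i ω') | ℱ i]) ω)) ^ 2 ∂μ
        ≤ n * C * τ ^ (2 - b)) := by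
  obtain ⟨hb₁, hb₂⟩ := hb
  have hψ : ∀ i, StronglyMeasurable[ℱ (i + 1)] (fun ω => truncFun τ (D i ω)) := fun i =>
    ((continuous_truncFun τ).measurable.comp (hmeas i)).stronglyMeasurable
  have hψ₂ : ∀ i, MemLp (fun ω => truncFun τ (D i ω)) 2 μ := fun i =>
    MemLp.of_bound ((hψ i).mono (ℱ.le _)).aestronglyMeasurable τ
      (ae_of_all _ fun ω => (norm_eq_abs _).trans_le (abs_truncFun_le hτ.le (D i ω)))
  have hmomentD : ∀ i, ∫ ω, |D i ω| ^ b ∂μ ≤ C := fun i => by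
    rw [← integral_condExp (ℱ.le i)]
    simpa using integral_mono_ae integrable_condExp (integrable_const C) (hcond i)
  have hmoment : ∀ i, ∫ ω, truncFun τ (D i ω) ^ 2 ∂μ ≤ C * τ ^ (2 - b) := fun i =>
    (integral_truncFun_sq_le hτ.le (by linarith) hb₂ (hint i)).trans
      (mul_le_mul_of_nonneg_right (hmomentD i) (rpow_nonneg hτ.le _))
  refine ⟨martingale_compensatedSum hψ fun i => (hψ₂ i).integrable one_le_two,
    memLp_compensatedSum one_le_two hψ₂, fun n _ => ?_⟩
  rw [mul_assoc]
  exact integral_compensatedSum_sq_le hψ hψ₂ hmoment n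

/-- Truncated, conditionally centered heavy-tailed martingale differences:
`D i` stands for `D_{i+1}` (F_{i+1}-measurable) and `ℱ i` for `F_i`, so that
`M n = Σ_{i=1}^n Z_i = Σ_{i<n} (ψ_τ(D i) − E[ψ_τ(D i) | ℱ i])`. -/
theorem truncated_martingale_variance_bound
    {Ω : Type*} {mΩ : MeasurableSpace Ω} (μ : Measure Ω) [IsProbabilityMeasure μ]
    (ℱ : Filtration ℕ mΩ)
    (b τ C : ℝ) (hb : b ∈ Set.Ioc (1 : ℝ) 2) (hτ : 0 < τ) (hC : 0 ≤ C)
    (D : ℕ → Ω → ℝ)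
    (hmeas : ∀ i, Measurable[ℱ (i + 1)] (D i))
    (hint : ∀ i, Integrable (fun ω => |D i ω| ^ b) μ)
    (hcond : ∀ i, ∀ᵐ ω ∂μ, (μ[fun ω' => |D i ω'| ^ b | ℱ i]) ω ≤ C) :
    Martingale
      (fun n ω => ∑ i ∈ Finset.range n,
        (truncFun τ (D i ω) - (μ[fun ω' => truncFun τ (D i ω') | ℱ i]) ω)) ℱ μ ∧
    (∀ n : ℕ,
      MemLp (fun ω => ∑ i ∈ Finset.range n,
        (truncFun τ (D i ω) - (μ[fun ω' => truncFun τ (D i ω') | ℱ i]) ω)) 2 μ) ∧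
    (∀ n : ℕ, 1 ≤ n →
      ∫ ω, (∑ i ∈ Finset.range n,
          (truncFun τ (D i ω) - (μ[fun ω' => truncFun τ (D i ω') | ℱ i]) ω)) ^ 2 ∂μ
        ≤ n * C * τ ^ (2 - b)) :=
  truncated_martingale_variance_bound_general μ ℱ b τ C hb hτ D hmeas hint hcond
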